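/- arXiv:1709.08706 — 2 statements merged into one kernel-verified Lean document; each statement's English description precedes it below -/
import Mathlib

section
/- Let c = γ + μ/β > 0 be fixed and, for each N ≥ 2, let ρ*_N ∈ (0,1) be bounded away from 0 and satisfy (1-ρ*_N) = (1-2ρ*_N)·(c + log N + log ρ*_N). Then ρ*_N → 1/2 as N → ∞, and for sufficiently large N, ρ*_N < 1/2. -/
open Filter Topology

/-! The right-hand factor `D_N = c + log N + log ρ_N` is at least `c + log N + log ε`, so it
tends to infinity. Since `1 - ρ_N > 0`, the equation `1 - ρ_N = (1 - 2ρ_N) D_N` forces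
`1 - 2ρ_N > 0` once `D_N > 0`, and `1 - ρ_N ≤ 1` gives `1 - 2ρ_N ≤ 1 / D_N → 0`. -/

lemma sub_two_mul_pos_and_le_inv {ρ D : ℝ} (hρ0 : 0 ≤ ρ) (hρ1 : ρ < 1) (hD : 0 < D)
    (h : 1 - ρ = (1 - 2 * ρ) * D) : 0 < 1 - 2 * ρ ∧ 1 - 2 * ρ ≤ D⁻¹ := by
  have hpos : 0 < 1 - 2 * ρ := pos_of_mul_pos_left (h ▸ sub_pos.2 hρ1) hD.le
  refine ⟨hpos, ?_⟩
  rw [← one_div, le_div_iff₀ hD]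
  linarith

lemma tendsto_half_of_sub_two_mul_le_inv {ι : Type*} {l : Filter ι} {ρ D : ι → ℝ}
    (hD : Tendsto D l atTop) (h : ∀ᶠ i in l, 0 < 1 - 2 * ρ i ∧ 1 - 2 * ρ i ≤ (D i)⁻¹) :
    Tendsto ρ l (𝓝 (1 / 2)) := by
  have hgap : Tendsto (fun i => 1 - 2 * ρ i) l (𝓝 0) :=
    tendsto_of_tendsto_of_tendsto_of_le_of_le' tendsto_const_nhds hD.inv_tendsto_atTop
      (h.mono fun _ hi => hi.1.le) (h.mono fun _ hi => hi.2)
  simpa using (tendsto_const_nhds (x := (1 : ℝ))).sub hgap |>.div_const 2 |>.congr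
    fun i => by ring

lemma tendsto_const_add_log_add_log_atTop (c ε : ℝ) (hε : 0 < ε) {ρ : ℕ → ℝ}
    (hρ : ∀ᶠ N in atTop, ε ≤ ρ N) :
    Tendsto (fun N : ℕ => c + Real.log N + Real.log (ρ N)) atTop atTop := by
  have hlog : Tendsto (fun N : ℕ => c + Real.log N + Real.log ε) atTop atTop :=
    tendsto_atTop_add_const_right _ _ <| tendsto_atTop_add_const_left _ _ <|
      Real.tendsto_log_atTop.comp tendsto_natCast_atTop_atTop
  refine tendsto_atTop_mono' _ ?_ hlog
  filter_upwards [hρ] with N hN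
  gcongr

theorem mean_field_optimal_density_tendsto_half_general (c : ℝ) (ρ : ℕ → ℝ)
    (hmem : ∀ N, 2 ≤ N → ρ N ∈ Set.Ioo (0 : ℝ) 1)
    (hbdd : ∃ ε > 0, ∀ N, 2 ≤ N → ε ≤ ρ N)
    (heq : ∀ N, 2 ≤ N →
      1 - ρ N = (1 - 2 * ρ N) * (c + Real.log N + Real.log (ρ N))) :
    Tendsto ρ atTop (𝓝 (1 / 2)) ∧ ∀ᶠ N : ℕ in atTop, ρ N < 1 / 2 := by
  obtain ⟨ε, hε, hερ⟩ := hbdd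
  have hD := tendsto_const_add_log_add_log_atTop c ε hε
    (eventually_atTop.2 ⟨2, hερ⟩)
  have hgap : ∀ᶠ N in atTop, 0 < 1 - 2 * ρ N ∧
      1 - 2 * ρ N ≤ (c + Real.log N + Real.log (ρ N))⁻¹ := by
    filter_upwards [eventually_ge_atTop 2, hD.eventually_gt_atTop 0] with N hN hDpos
    exact sub_two_mul_pos_and_le_inv (hmem N hN).1.le (hmem N hN).2 hDpos (heq N hN)
  exact ⟨tendsto_half_of_sub_two_mul_le_inv hD hgap, hgap.mono fun _ hN => by linarith [hN.1]⟩

/-- With `c = γ + μ/β > 0` fixed, if `ρ*_N ∈ (0,1)` is bounded away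
from `0` and satisfies `(1-ρ*_N) = (1-2ρ*_N)(c + log N + log ρ*_N)` for all `N ≥ 2`,
then `ρ*_N → 1/2` and `ρ*_N < 1/2` for all sufficiently large `N`. -/
theorem mean_field_optimal_density_tendsto_half (c : ℝ) (hc : 0 < c) (ρ : ℕ → ℝ)
    (hmem : ∀ N, 2 ≤ N → ρ N ∈ Set.Ioo (0 : ℝ) 1)
    (hbdd : ∃ ε > 0, ∀ N, 2 ≤ N → ε ≤ ρ N)
    (heq : ∀ N, 2 ≤ N →
      1 - ρ N = (1 - 2 * ρ N) * (c + Real.log N + Real.log (ρ N))) :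
    Tendsto ρ atTop (𝓝 (1 / 2)) ∧ ∀ᶠ N : ℕ in atTop, ρ N < 1 / 2 :=
  mean_field_optimal_density_tendsto_half_general c ρ hmem hbdd heq
end

section
/- For a symmetric simple random walk on ℤ started at 0, the expected first time at which the walk has visited r distinct sites equals r(r-1)/2. -/
open MeasureTheory ProbabilityTheory
open scoped ENNReal

/-- The first time (as an element of `ℝ≥0∞`, `⊤` if never) at which the walk with
partial sums `X` has visited `r` distinct sites (including the starting site `0`). -/
noncomputable def timeToVisitDistinct {Ω : Type*} (X : ℕ → Ω → ℤ) (r : ℕ) (ω : Ω) :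
    ℝ≥0∞ :=
  sInf ((fun n : ℕ => (n : ℝ≥0∞)) ''
    {n : ℕ | r ≤ ((Finset.range (n + 1)).image (fun i => X i ω)).card})

/-!
Let `a = M - S` and `b = S - m` be the distances from the position `S` of the walk to its
running maximum `M` and running minimum `m`, so that `a + b + 1` is the number of visited sites.
The potential `V = a² + b² + a + b` grows by exactly `2` in expectation at every step, whatever
`a, b ≥ 0` are. When the span first reaches `r`, at time `T`, the walk stands at an end of its
range, so `a * b = 0` and `V = r (r - 1)`. Stopping `V` at `T` gives
`E[V_{n ∧ T}] = 2 E[n ∧ T] = 2 ∑_{k<n} P(T > k)`, and the bounds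
`r (r - 1) P(T ≤ n) ≤ E[V_{n ∧ T}] ≤ r (r - 1)` squeeze `∑_k P(T > k) = E[T]` to
`r (r - 1) / 2`.
-/

open Finset Filter Topology

lemma hasSum_of_sum_range_le_of_le {p : ℕ → ℝ} {c : ℝ} (hp : ∀ n, 0 ≤ p n)
    (hle : ∀ n, ∑ k ∈ range n, p k ≤ c)
    (hge : ∀ n, c * (1 - p n) ≤ ∑ k ∈ range n, p k) :
    HasSum p c := by
  have hlim : Tendsto (fun n => c * (1 - p n)) atTop (𝓝 c) := by
    simpa using ((summable_of_sum_range_le hp hle).tendsto_atTop_zero.const_sub 1).const_mul c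
  exact (hasSum_iff_tendsto_nat_of_nonneg hp c).2
    (tendsto_of_tendsto_of_tendsto_of_le_of_le hlim tendsto_const_nhds hge hle)

lemma ENNReal.sInf_natCast_image_eq_tsum_indicator_compl {S : Set ℕ} (hS : IsUpperSet S) :
    sInf ((fun n : ℕ => (n : ℝ≥0∞)) '' S) = ∑' n, Sᶜ.indicator 1 n := by
  rw [← _root_.tsum_subtype, Pi.one_def, ENNReal.tsum_set_one]
  rcases S.eq_empty_or_nonempty with rfl | hne
  · simp
  · have hcompl : Sᶜ = ↑(Finset.range (sInf S)) := by
      ext n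
      simp only [Set.mem_compl_iff, Finset.coe_range, Set.mem_Iio]
      exact ⟨fun h => lt_of_not_ge fun hle => h (hS hle (Nat.sInf_mem hne)),
        fun h hn => (Nat.sInf_le hn).not_gt h⟩
    rw [hcompl, Set.encard_coe_eq_coe_finsetCard, Finset.card_range]
    refine le_antisymm (sInf_le ⟨_, Nat.sInf_mem hne, rfl⟩) (le_sInf ?_)
    rintro _ ⟨k, hk, rfl⟩
    simpa using Nat.sInf_le hk

namespace SimpleRandomWalk

def potential (a b : ℤ) : ℤ := a ^ 2 + b ^ 2 + a + b

def nextPotential (a b e : ℤ) : ℤ := potential (max (a - e) 0) (max (b + e) 0)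

lemma potential_nonneg {a b : ℤ} (ha : 0 ≤ a) (hb : 0 ≤ b) : 0 ≤ potential a b := by
  unfold potential; positivity

lemma potential_eq (a b : ℤ) : potential a b = (a + b) * (a + b + 1) - 2 * a * b := by
  unfold potential; ring

lemma potential_le {a b : ℤ} (ha : 0 ≤ a) (hb : 0 ≤ b) :
    potential a b ≤ (a + b) * (a + b + 1) := by
  rw [potential_eq]; nlinarith [mul_nonneg ha hb]

lemma nextPotential_le {a b e : ℤ} (ha : 0 ≤ a) (hb : 0 ≤ b) (he : |e| ≤ 1) :
    nextPotential a b e ≤ (a + b + 1) * (a + b + 2) := by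
  have ha' : 0 ≤ max (a - e) 0 := le_max_right _ _
  have hb' : 0 ≤ max (b + e) 0 := le_max_right _ _
  have hsum : max (a - e) 0 + max (b + e) 0 ≤ a + b + 1 := by
    rw [abs_le] at he; omega
  have := potential_le ha' hb'
  unfold nextPotential; nlinarith

lemma nextPotential_one_add_nextPotential_neg_one {a b : ℤ} (ha : 0 ≤ a) (hb : 0 ≤ b) :
    nextPotential a b 1 + nextPotential a b (-1) = 2 * potential a b + 4 := by
  unfold nextPotential
  rcases ha.eq_or_lt with rfl | ha <;> rcases hb.eq_or_lt with rfl | hb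
  · decide
  · rw [max_eq_right (by omega), max_eq_left (by omega), max_eq_left (by omega),
      max_eq_left (by omega)]
    unfold potential; ring
  · rw [max_eq_left (by omega), max_eq_left (by omega), max_eq_left (by omega),
      max_eq_right (by omega)]
    unfold potential; ring
  · rw [max_eq_left (by omega), max_eq_left (by omega), max_eq_left (by omega),
      max_eq_left (by omega)]
    unfold potential; ring

section Path

variable (w : ℕ → ℤ)

def runMax : ℕ → ℤ
  | 0 => w 0
  | n + 1 => max (runMax n) (w (n + 1))

def runMin : ℕ → ℤ
  | 0 => w 0
  | n + 1 => min (runMin n) (w (n + 1))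

def span (n : ℕ) : ℤ := runMax w n - runMin w n + 1

def gapAbove (n : ℕ) : ℤ := runMax w n - w n

def gapBelow (n : ℕ) : ℤ := w n - runMin w n

def walkPotential (n : ℕ) : ℤ := potential (gapAbove w n) (gapBelow w n)

/-- `V_{n ∧ T}`, where `T` is the time the span reaches `r`: at that time the potential is
`r * (r - 1)`. -/
def stoppedPotential (r n : ℕ) : ℤ :=
  if span w n < r then walkPotential w n else r * (r - 1)

def stoppedPotentialNext (r n : ℕ) (e : ℤ) : ℤ :=
  if span w n < r then nextPotential (gapAbove w n) (gapBelow w n) e else r * (r - 1)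

variable {w}

lemma le_runMax : ∀ n, w n ≤ runMax w n
  | 0 => le_rfl
  | _ + 1 => le_max_right _ _

lemma runMin_le : ∀ n, runMin w n ≤ w n
  | 0 => le_rfl
  | _ + 1 => min_le_right _ _

lemma gapAbove_nonneg (n : ℕ) : 0 ≤ gapAbove w n := sub_nonneg.2 (le_runMax n)

lemma gapBelow_nonneg (n : ℕ) : 0 ≤ gapBelow w n := sub_nonneg.2 (runMin_le n)

lemma span_eq (n : ℕ) : span w n = gapAbove w n + gapBelow w n + 1 := by
  unfold span gapAbove gapBelow; ring

lemma span_mono : Monotone (span w) :=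
  monotone_nat_of_le_succ fun n => by
    simp only [span, runMax, runMin]; omega

lemma span_succ_le {n : ℕ} (hn : |w (n + 1) - w n| ≤ 1) : span w (n + 1) ≤ span w n + 1 := by
  have := le_runMax (w := w) n
  have := runMin_le (w := w) n
  rw [abs_le] at hn
  simp only [span, runMax, runMin]; omega

lemma gapAbove_succ (n : ℕ) :
    gapAbove w (n + 1) = max (gapAbove w n - (w (n + 1) - w n)) 0 := by
  simp only [gapAbove, runMax]; omega

lemma gapBelow_succ (n : ℕ) :
    gapBelow w (n + 1) = max (gapBelow w n + (w (n + 1) - w n)) 0 := by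
  simp only [gapBelow, runMin]; omega

lemma walkPotential_succ (n : ℕ) :
    walkPotential w (n + 1) = nextPotential (gapAbove w n) (gapBelow w n) (w (n + 1) - w n) := by
  rw [walkPotential, gapAbove_succ, gapBelow_succ, nextPotential]

/-- When the span grows, the walk stands at one end of its range. -/
lemma walkPotential_succ_of_span_lt {n : ℕ} (h : span w n < span w (n + 1)) :
    walkPotential w (n + 1) = (span w (n + 1) - 1) * span w (n + 1) := by
  have hend : gapAbove w (n + 1) * gapBelow w (n + 1) = 0 := by
    simp only [span, runMax, runMin] at h
    simp only [gapAbove, gapBelow, runMax, runMin, mul_eq_zero]; omega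
  rw [walkPotential, potential_eq, span_eq]
  linear_combination (-2 : ℤ) * hend

lemma natCast_mul_sub_one_nonneg (r : ℕ) : (0 : ℤ) ≤ r * (r - 1) := by
  rcases Nat.eq_zero_or_pos r with rfl | hr
  · simp
  · exact mul_nonneg (Int.natCast_nonneg r) (by omega)

lemma stoppedPotential_nonneg (r n : ℕ) : 0 ≤ stoppedPotential w r n := by
  unfold stoppedPotential
  split_ifs
  · exact potential_nonneg (gapAbove_nonneg n) (gapBelow_nonneg n)
  · exact natCast_mul_sub_one_nonneg r

lemma stoppedPotential_zero (r : ℕ) : stoppedPotential w r 0 = 0 := by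
  simp only [stoppedPotential, walkPotential, span, gapAbove, gapBelow, runMax, runMin, sub_self,
    zero_add]
  split_ifs with h
  · rfl
  · have : r ≤ 1 := by omega
    interval_cases r <;> simp

lemma stoppedPotential_le (r n : ℕ) : stoppedPotential w r n ≤ r * (r - 1) := by
  unfold stoppedPotential
  split_ifs with h
  · have ha := gapAbove_nonneg (w := w) n
    have hb := gapBelow_nonneg (w := w) n
    have := potential_le ha hb
    rw [span_eq] at h
    unfold walkPotential; nlinarith
  · rfl

lemma stoppedPotentialNext_nonneg (r n : ℕ) (e : ℤ) : 0 ≤ stoppedPotentialNext w r n e := by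
  unfold stoppedPotentialNext nextPotential
  split_ifs
  · exact potential_nonneg (le_max_right _ _) (le_max_right _ _)
  · exact natCast_mul_sub_one_nonneg r

lemma stoppedPotentialNext_le (r n : ℕ) {e : ℤ} (he : |e| ≤ 1) :
    stoppedPotentialNext w r n e ≤ r * (r - 1) := by
  unfold stoppedPotentialNext
  split_ifs with h
  · have ha := gapAbove_nonneg (w := w) n
    have hb := gapBelow_nonneg (w := w) n
    have := nextPotential_le ha hb he
    rw [span_eq] at h
    nlinarith
  · rfl

lemma stoppedPotentialNext_one_add_neg_one (r n : ℕ) :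
    stoppedPotentialNext w r n 1 + stoppedPotentialNext w r n (-1)
      = 2 * stoppedPotential w r n + if span w n < r then 4 else 0 := by
  unfold stoppedPotentialNext stoppedPotential
  split_ifs
  · rw [nextPotential_one_add_nextPotential_neg_one (gapAbove_nonneg n) (gapBelow_nonneg n),
      walkPotential]
  · ring

lemma stoppedPotential_succ {r n : ℕ} (hn : |w (n + 1) - w n| ≤ 1) :
    stoppedPotential w r (n + 1) = stoppedPotentialNext w r n (w (n + 1) - w n) := by
  have hmono : span w n ≤ span w (n + 1) := span_mono (Nat.le_succ n)
  unfold stoppedPotential stoppedPotentialNext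
  rw [← walkPotential_succ]
  by_cases hn' : span w n < r
  · have := span_succ_le hn
    by_cases hsucc : span w (n + 1) < r
    · simp [hn', hsucc]
    · rw [if_neg hsucc, if_pos hn', walkPotential_succ_of_span_lt (by omega)]
      have : span w (n + 1) = r := by omega
      rw [this]; ring
  · rw [if_neg hn', if_neg (by omega)]

lemma image_range_eq_Icc (hw : ∀ n, |w (n + 1) - w n| ≤ 1) :
    ∀ n, (range (n + 1)).image w = Icc (runMin w n) (runMax w n)
  | 0 => by simp [runMax, runMin]
  | n + 1 => by
    have hlo := runMin_le (w := w) n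
    have hhi := le_runMax (w := w) n
    have hstep := abs_le.1 (hw n)
    rw [range_add_one, image_insert, image_range_eq_Icc hw n]
    ext z
    simp only [mem_insert, mem_Icc, runMax, runMin, min_le_iff, le_max_iff]
    omega

lemma card_image_range (hw : ∀ n, |w (n + 1) - w n| ≤ 1) (n : ℕ) :
    ((range (n + 1)).image w).card = (span w n).toNat := by
  rw [image_range_eq_Icc hw, Int.card_Icc, span]; omega

lemma sInf_visits_eq_tsum (hw : ∀ n, |w (n + 1) - w n| ≤ 1) (r : ℕ) :
    sInf ((fun n : ℕ => (n : ℝ≥0∞)) '' {n | r ≤ ((range (n + 1)).image w).card})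
      = ∑' n, {n | span w n < r}.indicator 1 n := by
  have hset : {n | r ≤ ((range (n + 1)).image w).card} = {n | span w n < r}ᶜ := by
    ext n
    have := span_eq (w := w) n
    have := gapAbove_nonneg (w := w) n
    have := gapBelow_nonneg (w := w) n
    simp only [Set.mem_ofPred_eq, Set.mem_compl_iff, not_lt, card_image_range hw]
    omega
  rw [hset, ENNReal.sInf_natCast_image_eq_tsum_indicator_compl]
  · simp
  · intro m n hmn hm
    simp only [Set.mem_compl_iff, Set.mem_ofPred_eq, not_lt] at hm ⊢
    exact hm.trans (span_mono hmn)

end Path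

section Probability

variable {Ω : Type*} {ξ : ℕ → Ω → ℤ}

def walk (ξ : ℕ → Ω → ℤ) (ω : Ω) (n : ℕ) : ℤ := ∑ i ∈ range n, ξ i ω

abbrev past (ξ : ℕ → Ω → ℤ) (n : ℕ) : MeasurableSpace Ω :=
  ⨆ i ∈ Set.Iio n, MeasurableSpace.comap (ξ i) inferInstance

lemma walk_succ_sub (ω : Ω) (n : ℕ) : walk ξ ω (n + 1) - walk ξ ω n = ξ n ω := by
  simp [walk, sum_range_succ]

lemma past_mono : Monotone (past ξ) := fun _ _ hmn =>
  biSup_mono fun _ hi => lt_of_lt_of_le hi hmn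

lemma measurable_step_past {i n : ℕ} (hin : i < n) : Measurable[past ξ n] (ξ i) :=
  Measurable.of_comap_le <| le_iSup₂
    (f := fun j (_ : j ∈ Set.Iio n) => MeasurableSpace.comap (ξ j) inferInstance) i hin

lemma measurable_walk_past {k n : ℕ} (hkn : k ≤ n) :
    Measurable[past ξ n] fun ω => walk ξ ω k :=
  Finset.measurable_sum _ fun i hi => measurable_step_past (by rw [mem_range] at hi; omega)

lemma measurable_runMax_past : ∀ n, Measurable[past ξ n] fun ω => runMax (walk ξ ω) n
  | 0 => measurable_walk_past le_rfl
  | n + 1 => ((measurable_runMax_past n).mono (past_mono n.le_succ) le_rfl).max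
      (measurable_walk_past le_rfl)

lemma measurable_runMin_past : ∀ n, Measurable[past ξ n] fun ω => runMin (walk ξ ω) n
  | 0 => measurable_walk_past le_rfl
  | n + 1 => ((measurable_runMin_past n).mono (past_mono n.le_succ) le_rfl).min
      (measurable_walk_past le_rfl)

lemma measurable_gapAbove_past (n : ℕ) :
    Measurable[past ξ n] fun ω => gapAbove (walk ξ ω) n :=
  (measurable_runMax_past n).sub (measurable_walk_past le_rfl)

lemma measurable_gapBelow_past (n : ℕ) :
    Measurable[past ξ n] fun ω => gapBelow (walk ξ ω) n :=
  (measurable_walk_past le_rfl).sub (measurable_runMin_past n)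

lemma measurableSet_span_lt_past (r n : ℕ) :
    MeasurableSet[past ξ n] {ω | span (walk ξ ω) n < r} :=
  ((measurable_runMax_past n).sub (measurable_runMin_past n)).add_const 1 measurableSet_Iio

lemma measurable_stoppedPotential_past (r n : ℕ) :
    Measurable[past ξ n] fun ω => stoppedPotential (walk ξ ω) r n :=
  Measurable.ite (measurableSet_span_lt_past r n)
    ((measurable_of_countable (Function.uncurry potential)).comp
      ((measurable_gapAbove_past n).prodMk (measurable_gapBelow_past n)))
    measurable_const

lemma measurable_stoppedPotentialNext_past (r n : ℕ) (e : ℤ) :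
    Measurable[past ξ n] fun ω => stoppedPotentialNext (walk ξ ω) r n e := by
  have h := (measurable_of_countable fun p : ℤ × ℤ => nextPotential p.1 p.2 e).comp
    ((measurable_gapAbove_past (ξ := ξ) n).prodMk (measurable_gapBelow_past n))
  rw [Function.comp_def] at h
  unfold stoppedPotentialNext
  exact Measurable.ite (measurableSet_span_lt_past r n) h measurable_const

variable [MeasurableSpace Ω] {μ : Measure Ω}

lemma past_le (hm : ∀ n, Measurable (ξ n)) (n : ℕ) : past ξ n ≤ ‹MeasurableSpace Ω› :=
  iSup₂_le fun i _ => (hm i).comap_le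

lemma measurableSet_span_lt (hm : ∀ n, Measurable (ξ n)) (r n : ℕ) :
    MeasurableSet {ω | span (walk ξ ω) n < r} :=
  past_le hm n _ (measurableSet_span_lt_past r n)

lemma indep_past_step (hm : ∀ n, Measurable (ξ n)) (hindep : iIndepFun ξ μ) (n : ℕ) :
    Indep (past ξ n) (MeasurableSpace.comap (ξ n) inferInstance) μ := by
  have h := indep_iSup_of_disjoint (fun i => (hm i).comap_le)
    ((iIndepFun_iff_iIndep _ _ _).1 hindep) (S := Set.Iio n) (T := {n}) (by simp)
  simpa only [Set.mem_singleton_iff, iSup_iSup_eq_left] using h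

lemma ae_eq_one_or_eq_neg_one [IsProbabilityMeasure μ] {X : Ω → ℤ} (hX : Measurable X)
    (h : μ {ω | X ω = 1} = 1 / 2 ∧ μ {ω | X ω = -1} = 1 / 2) :
    ∀ᵐ ω ∂μ, X ω = 1 ∨ X ω = -1 := by
  have h1 : MeasurableSet {ω | X ω = 1} := hX (measurableSet_singleton 1)
  have h2 : MeasurableSet {ω | X ω = -1} := hX (measurableSet_singleton (-1))
  have hdisj : Disjoint {ω | X ω = 1} {ω | X ω = -1} :=
    Set.disjoint_left.2 fun ω h1 h2 => by simp_all
  have hs : MeasurableSet {ω | X ω = 1 ∨ X ω = -1} := by rw [Set.ofPred_or]; exact h1.union h2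
  rw [ae_iff_measure_eq hs.nullMeasurableSet, Set.ofPred_or, measure_union hdisj h2,
    h.1, h.2, ENNReal.add_halves, measure_univ]

lemma integral_comp_step [IsProbabilityMeasure μ] (hm : ∀ n, Measurable (ξ n))
    (hindep : iIndepFun ξ μ) {n : ℕ}
    (hstep : μ {ω | ξ n ω = 1} = 1 / 2 ∧ μ {ω | ξ n ω = -1} = 1 / 2)
    {F : ℤ → Ω → ℝ} (hF : ∀ e, Measurable[past ξ n] (F e))
    (hF₁ : Integrable (F 1) μ) (hF₂ : Integrable (F (-1)) μ) :
    ∫ ω, F (ξ n ω) ω ∂μ = (∫ ω, F 1 ω ∂μ + ∫ ω, F (-1) ω ∂μ) / 2 := by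
  have hset (e : ℤ) : MeasurableSet {ω | ξ n ω = e} := hm n (measurableSet_singleton e)
  have hside (e : ℤ) (he : μ {ω | ξ n ω = e} = 1 / 2) :
      ∫ ω, {ω | ξ n ω = e}.indicator (F e) ω ∂μ = (∫ ω, F e ω ∂μ) / 2 := by
    have hind : IndepFun (F e) ({ω | ξ n ω = e}.indicator (1 : Ω → ℝ)) μ := by
      have h : IndepFun (F e) (ξ n) μ := by
        rw [IndepFun_iff_Indep]
        exact indep_of_indep_of_le_left (indep_past_step hm hindep n) (hF e).comap_le
      exact h.comp measurable_id (measurable_one.indicator (measurableSet_singleton e))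
    have hprod : {ω | ξ n ω = e}.indicator (F e)
        = F e * {ω | ξ n ω = e}.indicator (1 : Ω → ℝ) := by
      ext ω; simp [Set.indicator_apply]
    rw [hprod, hind.integral_mul_eq_mul_integral
      ((hF e).mono (past_le hm n) le_rfl).aestronglyMeasurable
      (measurable_one.indicator (hset e)).aestronglyMeasurable,
      integral_indicator_one (hset e), measureReal_def, he]
    norm_num [div_eq_mul_inv]
  have hae : (fun ω => F (ξ n ω) ω) =ᵐ[μ]
      fun ω => {ω | ξ n ω = 1}.indicator (F 1) ω
        + {ω | ξ n ω = -1}.indicator (F (-1)) ω := by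
    filter_upwards [ae_eq_one_or_eq_neg_one (hm n) hstep] with ω hω
    rcases hω with h | h <;> simp [h]
  rw [integral_congr_ae hae, integral_add (hF₁.indicator (hset 1)) (hF₂.indicator (hset (-1))),
    hside 1 hstep.1, hside (-1) hstep.2]
  ring

lemma integrable_intCast_of_mem_Icc [IsFiniteMeasure μ] {f : Ω → ℤ} (hf : Measurable f)
    {C : ℤ} (hfC : ∀ ω, 0 ≤ f ω ∧ f ω ≤ C) : Integrable (fun ω => (f ω : ℝ)) μ :=
  Integrable.of_bound ((measurable_of_countable _).comp hf).aestronglyMeasurable C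
    (ae_of_all _ fun ω => by
      rw [Real.norm_eq_abs, abs_of_nonneg (by exact_mod_cast (hfC ω).1)]
      exact_mod_cast (hfC ω).2)

lemma lintegral_timeToVisitDistinct (hm : ∀ n, Measurable (ξ n))
    (hξ : ∀ᵐ ω ∂μ, ∀ i, |ξ i ω| ≤ 1) (r : ℕ) :
    ∫⁻ ω, timeToVisitDistinct (fun n ω => ∑ i ∈ range n, ξ i ω) r ω ∂μ
      = ∑' n, μ {ω | span (walk ξ ω) n < r} := by
  have hset := measurableSet_span_lt hm r
  have hpt : ∀ᵐ ω ∂μ, timeToVisitDistinct (fun n ω => ∑ i ∈ range n, ξ i ω) r ω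
      = ∑' n, {ω | span (walk ξ ω) n < r}.indicator 1 ω := by
    filter_upwards [hξ] with ω hω
    have hw (n : ℕ) : |walk ξ ω (n + 1) - walk ξ ω n| ≤ 1 := by
      rw [walk_succ_sub]; exact hω n
    refine (sInf_visits_eq_tsum hw r).trans ?_
    simp only [Set.indicator_apply, Set.mem_ofPred_eq, Pi.one_apply]
  rw [lintegral_congr_ae hpt,
    lintegral_tsum fun n => (measurable_one.indicator (hset n)).aemeasurable]
  exact tsum_congr fun n => lintegral_indicator_one (hset n)

variable [IsProbabilityMeasure μ] (hm : ∀ n, Measurable (ξ n)) (hindep : iIndepFun ξ μ)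
  (hstep : ∀ n, μ {ω | ξ n ω = 1} = 1 / 2 ∧ μ {ω | ξ n ω = -1} = 1 / 2)
include hm

lemma integrable_stoppedPotential (r n : ℕ) :
    Integrable (fun ω => (stoppedPotential (walk ξ ω) r n : ℝ)) μ :=
  integrable_intCast_of_mem_Icc
    ((measurable_stoppedPotential_past r n).mono (past_le hm n) le_rfl)
    fun _ => ⟨stoppedPotential_nonneg r n, stoppedPotential_le r n⟩

include hindep hstep in
lemma integral_stoppedPotential_succ (r n : ℕ) :
    ∫ ω, (stoppedPotential (walk ξ ω) r (n + 1) : ℝ) ∂μ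
      = ∫ ω, (stoppedPotential (walk ξ ω) r n : ℝ) ∂μ
        + 2 * μ.real {ω | span (walk ξ ω) n < r} := by
  set F : ℤ → Ω → ℝ := fun e ω => stoppedPotentialNext (walk ξ ω) r n e
  have hF (e : ℤ) (he : |e| ≤ 1) : Integrable (F e) μ :=
    integrable_intCast_of_mem_Icc
      ((measurable_stoppedPotentialNext_past r n e).mono (past_le hm n) le_rfl)
      fun _ => ⟨stoppedPotentialNext_nonneg r n e, stoppedPotentialNext_le r n he⟩
  have hae : (fun ω => (stoppedPotential (walk ξ ω) r (n + 1) : ℝ)) =ᵐ[μ]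
      fun ω => F (ξ n ω) ω := by
    filter_upwards [ae_eq_one_or_eq_neg_one (hm n) (hstep n)] with ω hω
    have hξ : |ξ n ω| ≤ 1 := by rcases hω with h | h <;> simp [h]
    rw [stoppedPotential_succ (by rwa [walk_succ_sub]), walk_succ_sub]
  have hsum : ∀ ω, F 1 ω + F (-1) ω = 2 * (stoppedPotential (walk ξ ω) r n : ℝ)
      + 4 * {ω | span (walk ξ ω) n < r}.indicator 1 ω := by
    intro ω
    simp only [F, ← Int.cast_add, stoppedPotentialNext_one_add_neg_one, Set.indicator_apply,
      Set.mem_ofPred_eq, Pi.one_apply]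
    split_ifs <;> push_cast <;> ring
  rw [integral_congr_ae hae, integral_comp_step hm hindep (hstep n) (F := F)
      (fun e => (measurable_of_countable _).comp (measurable_stoppedPotentialNext_past r n e))
      (hF 1 le_rfl) (hF (-1) (by simp)),
    ← integral_add (hF 1 le_rfl) (hF (-1) (by simp))]
  have hset := measurableSet_span_lt hm r n
  have hind : Integrable
      (fun ω => 4 * {ω | span (walk ξ ω) n < r}.indicator (1 : Ω → ℝ) ω) μ :=
    ((integrable_const 1).indicator hset).const_mul 4
  simp_rw [hsum]
  rw [integral_add ((integrable_stoppedPotential hm r n).const_mul 2) hind, integral_const_mul,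
    integral_const_mul, integral_indicator_one hset]
  ring

include hindep hstep in
lemma integral_stoppedPotential (r n : ℕ) :
    ∫ ω, (stoppedPotential (walk ξ ω) r n : ℝ) ∂μ
      = 2 * ∑ k ∈ range n, μ.real {ω | span (walk ξ ω) k < r} := by
  induction n with
  | zero => simp [stoppedPotential_zero]
  | succ n ih =>
    rw [integral_stoppedPotential_succ hm hindep hstep, ih, sum_range_succ]
    ring

lemma integral_stoppedPotential_le (r n : ℕ) :
    ∫ ω, (stoppedPotential (walk ξ ω) r n : ℝ) ∂μ ≤ (r : ℝ) * ((r : ℝ) - 1) := by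
  have hle (ω : Ω) : (stoppedPotential (walk ξ ω) r n : ℝ) ≤ (r : ℝ) * ((r : ℝ) - 1) :=
    (Int.cast_le.2 (stoppedPotential_le r n)).trans_eq (by push_cast; rfl)
  simpa using integral_mono (integrable_stoppedPotential (μ := μ) hm r n) (integrable_const _) hle

lemma le_integral_stoppedPotential (r n : ℕ) :
    (r : ℝ) * ((r : ℝ) - 1) * (1 - μ.real {ω | span (walk ξ ω) n < r})
      ≤ ∫ ω, (stoppedPotential (walk ξ ω) r n : ℝ) ∂μ := by
  set s := {ω | span (walk ξ ω) n < r}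
  have hset : MeasurableSet s := measurableSet_span_lt hm r n
  have hstopped : Set.EqOn (fun ω => (stoppedPotential (walk ξ ω) r n : ℝ))
      (fun _ => (r : ℝ) * ((r : ℝ) - 1)) sᶜ := fun ω hω => by
    have hω' : ¬span (walk ξ ω) n < r := hω
    simp only [stoppedPotential, if_neg hω']; push_cast; rfl
  calc _ = ∫ ω in sᶜ, (stoppedPotential (walk ξ ω) r n : ℝ) ∂μ := by
        rw [setIntegral_congr_fun hset.compl hstopped, setIntegral_const,
          probReal_compl_eq_one_sub hset, smul_eq_mul, mul_comm]
    _ ≤ _ := setIntegral_le_integral (integrable_stoppedPotential hm r n)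
        (ae_of_all _ fun _ => Int.cast_nonneg (stoppedPotential_nonneg r n))

include hindep hstep in
lemma hasSum_measureReal_span_lt (r : ℕ) :
    HasSum (fun n => μ.real {ω | span (walk ξ ω) n < r}) ((r : ℝ) * ((r : ℝ) - 1) / 2) := by
  refine hasSum_of_sum_range_le_of_le (fun _ => measureReal_nonneg) (fun n => ?_) (fun n => ?_)
  · linarith [integral_stoppedPotential hm hindep hstep r n,
      integral_stoppedPotential_le (μ := μ) hm r n]
  · linarith [integral_stoppedPotential hm hindep hstep r n,
      le_integral_stoppedPotential (μ := μ) hm r n]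

end Probability

end SimpleRandomWalk

open SimpleRandomWalk

theorem expected_time_to_visit_distinct_sites_general (r : ℕ)
    {Ω : Type*} [MeasurableSpace Ω] (μ : Measure Ω) [IsProbabilityMeasure μ]
    (ξ : ℕ → Ω → ℤ) (hmeas : ∀ n, Measurable (ξ n))
    (hstep : ∀ n, μ {ω | ξ n ω = 1} = 1 / 2 ∧ μ {ω | ξ n ω = -1} = 1 / 2)
    (hindep : iIndepFun ξ μ) :
    ∫⁻ ω, timeToVisitDistinct (fun n ω => ∑ i ∈ Finset.range n, ξ i ω) r ω ∂μ
      = ENNReal.ofReal ((r : ℝ) * ((r : ℝ) - 1) / 2) := by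
  have hξ : ∀ᵐ ω ∂μ, ∀ i, |ξ i ω| ≤ 1 := ae_all_iff.2 fun i =>
    (ae_eq_one_or_eq_neg_one (hmeas i) (hstep i)).mono fun ω h => by
      rcases h with h | h <;> simp [h]
  have hsum := hasSum_measureReal_span_lt hmeas hindep hstep r
  rw [lintegral_timeToVisitDistinct hmeas hξ, ← hsum.tsum_eq,
    ENNReal.ofReal_tsum_of_nonneg (fun _ => measureReal_nonneg) hsum.summable]
  exact tsum_congr fun n => (ofReal_measureReal).symm

/-- For a symmetric simple random walk on `ℤ` started at `0`
(i.i.d. `±1` steps with probability `1/2` each), the expected first time at which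
the walk has visited `r` distinct sites equals `r(r-1)/2`. -/
theorem expected_time_to_visit_distinct_sites (r : ℕ) (hr : 1 ≤ r)
    {Ω : Type*} [MeasurableSpace Ω] (μ : Measure Ω) [IsProbabilityMeasure μ]
    (ξ : ℕ → Ω → ℤ) (hmeas : ∀ n, Measurable (ξ n))
    (hstep : ∀ n, μ {ω | ξ n ω = 1} = 1 / 2 ∧ μ {ω | ξ n ω = -1} = 1 / 2)
    (hindep : iIndepFun ξ μ) :
    ∫⁻ ω, timeToVisitDistinct (fun n ω => ∑ i ∈ Finset.range n, ξ i ω) r ω ∂μ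
      = ENNReal.ofReal ((r : ℝ) * ((r : ℝ) - 1) / 2) :=
  expected_time_to_visit_distinct_sites_general r μ ξ hmeas hstep hindep
end
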